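/- Let G be a simple graph on a finite vertex set V with |V| > 2, let [G] be its binding graph on W = V ⊕ P, and let M be any stable vertex-recognizing refinement of [G]. Let u, v, r, s ∈ V with u ≠ v and r ≠ s, and let p = inr{u,v} and q = inr{r,s}. Then the following are equivalent: (a) the multisets {M(inl u, inl v), M(inl v, inl u)} and {M(inl r, inl s), M(inl s, inl r)} are equal; (b) the multisets {M(inl u, p), M(inl v, p)} and {M(inl r, q), M(inl s, q)} are equal; (c) M(p,p) = M(q,q). -/

import Mathlib

/-!
An equality `M a b = M c d` in a stable labeling transports along 2-walks: every `k` has a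
partner `k'` with `M a k = M c k'` and `M k b = M k' d`. Since the labels determine adjacency
and recognise the diagonal, partners of neighbours are neighbours, and the partner of `b` is
`d`. The binding vertex `{r, s}` has no neighbours but `r` and `s`, which pins the partners
down once `k` is chosen among `u`, `v` and `{u, v}`. The one case this leaves open, a basic
vertex `x` adjacent to `r` and `s` as the partner of `{u, v}`, is excluded by degree, which
stability preserves between vertices with equal diagonal labels: a binding vertex has
degree 2, while `x` has the neighbours `r`, `s` and `{x, r}`. The transposed labeling
`flip M` is again a stable vertex-recognizing refinement, which yields the mirrored
statements for free.
-/

namespace Binding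

/-- The diamond product of a labeling: the multiset of 2-d-walk label pairs. -/
def diamond {V L : Type*} [Fintype V] (X : V → V → L) : V → V → Multiset (L × L) :=
  fun u v => Finset.univ.val.map fun k => (X u k, X k v)

/-- A labeling recognizes vertices if diagonal labels never coincide with
off-diagonal labels. -/
def RecognizesVertices {V L : Type*} (X : V → V → L) : Prop :=
  ∀ i u v : V, u ≠ v → X i i ≠ X u v

/-- `Y` refines `X` if equal `Y`-labels imply equal `X`-labels. -/
def Refines {V L L' : Type*} (Y : V → V → L') (X : V → V → L) : Prop :=
  ∀ u v r s : V, Y u v = Y r s → X u v = X r s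

/-- A labeling is stable if labels agree exactly when their diamond products agree. -/
def Stable {V L : Type*} [Fintype V] (X : V → V → L) : Prop :=
  ∀ u v r s : V, X u v = X r s ↔ diamond X u v = diamond X r s

/-- The type of unordered pairs of distinct vertices of `V`. -/
abbrev Pairs (V : Type*) : Type _ := {s : Finset V // s.card = 2}

/-- The binding graph of a simple graph `G`: each pair of distinct basic
vertices gets a fresh binding vertex adjacent exactly to the two of them. -/
def bindingGraph {V : Type*} (G : SimpleGraph V) : SimpleGraph (V ⊕ Pairs V) where
  Adj a b :=
    match a, b with
    | Sum.inl u, Sum.inl v => G.Adj u v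
    | Sum.inl u, Sum.inr p => u ∈ p.val
    | Sum.inr p, Sum.inl u => u ∈ p.val
    | Sum.inr _, Sum.inr _ => False
  symm := by
    constructor
    rintro (u | p) (v | q) h
    · exact G.symm.symm u v h
    · exact h
    · exact h
    · exact h
  loopless := by
    constructor
    rintro (u | p) h
    · exact G.loopless.irrefl u h
    · exact h

/-- A labeling is a stable vertex-recognizing refinement of a simple graph if it
is stable, recognizes vertices, and equal off-diagonal labels agree on
adjacency. -/
def IsSVRRefinement {W L : Type*} [Fintype W] (H : SimpleGraph W) (M : W → W → L) : Prop :=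
  Stable M ∧ RecognizesVertices M ∧
    ∀ u v r s : W, u ≠ v → r ≠ s → M u v = M r s → (H.Adj u v ↔ H.Adj r s)

lemma pair_eq_pair_iff {α : Type*} {a b c d : α} :
    ({a, b} : Multiset α) = {c, d} ↔ a = c ∧ b = d ∨ a = d ∧ b = c := by
  simp only [Multiset.insert_eq_cons, Multiset.cons_eq_cons, Multiset.singleton_inj,
    Multiset.singleton_eq_cons_iff, exists_eq_right_right, and_true]
  grind

section Refinement

variable {W L : Type*} [Fintype W] {M : W → W → L}

lemma Stable.exists_of_eq (hs : Stable M) {a b c d : W} (h : M a b = M c d) (k : W) :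
    ∃ k', M a k = M c k' ∧ M k b = M k' d := by
  have hk : (M a k, M k b) ∈ diamond M c d :=
    (hs a b c d).mp h ▸ Multiset.mem_map_of_mem _ (Finset.mem_univ_val k)
  obtain ⟨k', -, hk'⟩ := Multiset.mem_map.mp hk
  exact ⟨k', (Prod.ext_iff.mp hk').1.symm, (Prod.ext_iff.mp hk').2.symm⟩

lemma Stable.flip (hs : Stable M) : Stable (_root_.flip M) := by
  have hswap (u v : W) : diamond (_root_.flip M) u v = (diamond M v u).map Prod.swap := by
    simp [diamond, Function.flip_def]
  intro u v r s
  rw [hswap, hswap, (Multiset.map_injective Prod.swap_injective).eq_iff]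
  exact hs v u s r

lemma diag_eq_of_eq (hs : Stable M) (hr : RecognizesVertices M) {a b c d : W}
    (h : M a b = M c d) : M b b = M d d := by
  obtain ⟨k', -, hk'⟩ := hs.exists_of_eq h b
  by_cases hk : k' = d
  · exact hk ▸ hk'
  · exact absurd hk' (hr b k' d hk)

namespace IsSVRRefinement

variable {H : SimpleGraph W} (hM : IsSVRRefinement H M)
include hM

lemma flip : IsSVRRefinement H (_root_.flip M) := by
  obtain ⟨hs, hr, href⟩ := hM
  refine ⟨hs.flip, fun i u v huv => hr i v u huv.symm, fun u v r s huv hrs h => ?_⟩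
  simpa only [H.adj_comm v u, H.adj_comm s r] using href v u s r huv.symm hrs.symm h

lemma adj_of_eq {a b c d : W} (h : M a b = M c d) (hab : H.Adj a b) : H.Adj c d := by
  have hcd : c ≠ d := by
    rintro rfl
    exact hM.2.1 c a b hab.ne h.symm
  exact (hM.2.2 a b c d hab.ne hcd h).mp hab

lemma degree_eq_of_diag_eq [DecidableRel H.Adj] {a b : W} (h : M a a = M b b) :
    H.degree a = H.degree b := by
  classical
  let IsEdgeLabel : L → Prop := fun l => ∃ x y, H.Adj x y ∧ M x y = l
  have hadj (x y : W) : H.Adj x y ↔ IsEdgeLabel (M x y) :=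
    ⟨fun hxy => ⟨x, y, hxy, rfl⟩, fun ⟨_, _, hxy, hl⟩ => hM.adj_of_eq hl hxy⟩
  have hdeg (x : W) :
      H.degree x = (diamond M x x).countP (fun z => IsEdgeLabel z.1) := by
    rw [← SimpleGraph.card_neighborFinset_eq_degree, SimpleGraph.neighborFinset_eq_filter,
      diamond, Multiset.countP_map]
    simp only [← hadj]
    rfl
  rw [hdeg, hdeg, (hM.1 a a b b).mp h]

end IsSVRRefinement

end Refinement

section BindingGraph

open Sum

variable {V : Type*} [DecidableEq V] {G : SimpleGraph V} {u v r s x : V}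

def bindingVertex (u v : V) (huv : u ≠ v) : V ⊕ Pairs V :=
  inr ⟨{u, v}, Finset.card_pair huv⟩

lemma bindingVertex_comm (huv : u ≠ v) : bindingVertex v u huv.symm = bindingVertex u v huv :=
  congrArg inr (Subtype.ext (Finset.pair_comm v u))

lemma inr_eq_bindingVertex {t : Pairs V} (hrs : r ≠ s) (hr : r ∈ t.val) (hs : s ∈ t.val) :
    inr t = bindingVertex r s hrs := by
  refine congrArg inr (Subtype.ext (Finset.eq_of_subset_of_card_le ?_ ?_).symm)
  · exact Finset.insert_subset hr (Finset.singleton_subset_iff.mpr hs)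
  · rw [t.2, Finset.card_pair hrs]

lemma bindingGraph_adj_bindingVertex_iff {y : V ⊕ Pairs V} (hrs : r ≠ s) :
    (bindingGraph G).Adj y (bindingVertex r s hrs) ↔ y = inl r ∨ y = inl s := by
  rcases y with y | t <;> simp [bindingGraph, bindingVertex]

lemma bindingGraph_adj_left_bindingVertex (huv : u ≠ v) :
    (bindingGraph G).Adj (inl u) (bindingVertex u v huv) :=
  (bindingGraph_adj_bindingVertex_iff huv).mpr (Or.inl rfl)

lemma bindingGraph_adj_right_bindingVertex (huv : u ≠ v) :
    (bindingGraph G).Adj (inl v) (bindingVertex u v huv) :=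
  (bindingGraph_adj_bindingVertex_iff huv).mpr (Or.inr rfl)

variable [Fintype V] [DecidableRel (bindingGraph G).Adj]

lemma degree_bindingVertex_le (huv : u ≠ v) :
    (bindingGraph G).degree (bindingVertex u v huv) ≤ 2 := by
  rw [← SimpleGraph.card_neighborFinset_eq_degree]
  refine (Finset.card_le_card (t := {inl u, inl v}) fun y hy => ?_).trans Finset.card_le_two
  rw [SimpleGraph.mem_neighborFinset, SimpleGraph.adj_comm,
    bindingGraph_adj_bindingVertex_iff] at hy
  simpa using hy

lemma three_le_degree_inl (hrs : r ≠ s) (hr : G.Adj x r) (hs : G.Adj x s) :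
    3 ≤ (bindingGraph G).degree (inl x) := by
  rw [← SimpleGraph.card_neighborFinset_eq_degree]
  calc 3 = ({inl r, inl s, bindingVertex x r hr.ne} : Finset (V ⊕ Pairs V)).card := by
        simp [bindingVertex, hrs]
    _ ≤ _ := Finset.card_le_card fun y hy => by
        simp only [Finset.mem_insert, Finset.mem_singleton] at hy
        rw [SimpleGraph.mem_neighborFinset]
        rcases hy with rfl | rfl | rfl
        · simpa [bindingGraph] using hr
        · simpa [bindingGraph] using hs
        · simp [bindingGraph, bindingVertex]

end BindingGraph

section Labels

open Sum

variable {V L : Type*} [Fintype V] [DecidableEq V] {G : SimpleGraph V}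
  {M : (V ⊕ Pairs V) → (V ⊕ Pairs V) → L} (hM : IsSVRRefinement (bindingGraph G) M)
  {u v r s : V} (huv : u ≠ v) (hrs : r ≠ s)
include hM

lemma label_inl_bindingVertex_eq_of_label_inl_eq
    (h : M (inl u) (inl v) = M (inl r) (inl s)) :
    M (inl u) (bindingVertex u v huv) = M (inl r) (bindingVertex r s hrs) := by
  classical
  obtain ⟨k, hup, hpv⟩ := hM.1.exists_of_eq h (bindingVertex u v huv)
  have hrk := hM.adj_of_eq hup (bindingGraph_adj_left_bindingVertex huv)
  have hks := hM.adj_of_eq hpv (bindingGraph_adj_right_bindingVertex huv).symm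
  rcases k with x | t
  · have hdeg := hM.degree_eq_of_diag_eq (diag_eq_of_eq hM.1 hM.2.1 hup)
    have := degree_bindingVertex_le (G := G) huv
    have := three_le_degree_inl hrs hrk.symm hks
    omega
  · rwa [inr_eq_bindingVertex hrs hrk hks] at hup

lemma label_inl_eq_of_label_inl_bindingVertex_eq
    (h : M (inl u) (bindingVertex u v huv) = M (inl r) (bindingVertex r s hrs)) :
    M (inl u) (inl v) = M (inl r) (inl s) := by
  obtain ⟨k, huv', hvp⟩ := hM.1.exists_of_eq h (inl v)
  rcases (bindingGraph_adj_bindingVertex_iff hrs).mp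
    (hM.adj_of_eq hvp (bindingGraph_adj_right_bindingVertex huv)) with rfl | rfl
  · exact absurd huv'.symm (hM.2.1 _ _ _ (inl_injective.ne huv))
  · exact huv'

lemma label_inl_eq_iff_label_inl_bindingVertex_eq :
    M (inl u) (inl v) = M (inl r) (inl s) ↔
      M (inl u) (bindingVertex u v huv) = M (inl r) (bindingVertex r s hrs) :=
  ⟨label_inl_bindingVertex_eq_of_label_inl_eq hM huv hrs,
    label_inl_eq_of_label_inl_bindingVertex_eq hM huv hrs⟩

lemma pair_labels_eq_iff_binding_labels_eq :
    ({M (inl u) (inl v), M (inl v) (inl u)} : Multiset L) =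
        {M (inl r) (inl s), M (inl s) (inl r)} ↔
      ({M (inl u) (bindingVertex u v huv), M (inl v) (bindingVertex u v huv)} : Multiset L) =
        {M (inl r) (bindingVertex r s hrs), M (inl s) (bindingVertex r s hrs)} := by
  rw [pair_eq_pair_iff, pair_eq_pair_iff,
    label_inl_eq_iff_label_inl_bindingVertex_eq hM huv hrs,
    label_inl_eq_iff_label_inl_bindingVertex_eq hM huv.symm hrs.symm,
    label_inl_eq_iff_label_inl_bindingVertex_eq hM huv hrs.symm,
    label_inl_eq_iff_label_inl_bindingVertex_eq hM huv.symm hrs,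
    bindingVertex_comm huv, bindingVertex_comm hrs]

lemma diag_bindingVertex_eq_of_binding_labels_eq
    (h : ({M (inl u) (bindingVertex u v huv), M (inl v) (bindingVertex u v huv)} : Multiset L) =
      {M (inl r) (bindingVertex r s hrs), M (inl s) (bindingVertex r s hrs)}) :
    M (bindingVertex u v huv) (bindingVertex u v huv) =
      M (bindingVertex r s hrs) (bindingVertex r s hrs) := by
  rcases pair_eq_pair_iff.mp h with ⟨h, -⟩ | ⟨h, -⟩ <;> exact diag_eq_of_eq hM.1 hM.2.1 h

lemma pair_labels_eq_of_diag_bindingVertex_eq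
    (h : M (bindingVertex u v huv) (bindingVertex u v huv) =
      M (bindingVertex r s hrs) (bindingVertex r s hrs)) :
    ({M (inl u) (inl v), M (inl v) (inl u)} : Multiset L) =
      {M (inl r) (inl s), M (inl s) (inl r)} := by
  have oriented {r s : V} (hrs : r ≠ s)
      (hpu : M (bindingVertex u v huv) (inl u) = M (bindingVertex r s hrs) (inl r))
      (hup : M (inl u) (bindingVertex u v huv) = M (inl r) (bindingVertex r s hrs)) :
      M (inl u) (inl v) = M (inl r) (inl s) ∧ M (inl v) (inl u) = M (inl s) (inl r) :=
    ⟨label_inl_eq_of_label_inl_bindingVertex_eq hM huv hrs hup,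
      label_inl_eq_of_label_inl_bindingVertex_eq hM.flip huv hrs hpu⟩
  obtain ⟨k, hpu, hup⟩ := hM.1.exists_of_eq h (inl u)
  rcases (bindingGraph_adj_bindingVertex_iff hrs).mp
    (hM.adj_of_eq hup (bindingGraph_adj_left_bindingVertex huv)) with rfl | rfl
  · obtain ⟨h₁, h₂⟩ := oriented hrs hpu hup
    rw [h₁, h₂]
  · rw [← bindingVertex_comm hrs] at hpu hup
    obtain ⟨h₁, h₂⟩ := oriented hrs.symm hpu hup
    rw [h₁, h₂, Multiset.pair_comm]

end Labels

theorem binding_labels_equivalent_general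
    {V L : Type*} [Fintype V] [DecidableEq V] (G : SimpleGraph V)
    (M : (V ⊕ Pairs V) → (V ⊕ Pairs V) → L)
    (hM : IsSVRRefinement (bindingGraph G) M)
    (u v r s : V) (huv : u ≠ v) (hrs : r ≠ s) :
    let p : V ⊕ Pairs V := Sum.inr ⟨{u, v}, Finset.card_pair huv⟩
    let q : V ⊕ Pairs V := Sum.inr ⟨{r, s}, Finset.card_pair hrs⟩
    (((({M (Sum.inl u) (Sum.inl v), M (Sum.inl v) (Sum.inl u)} : Multiset L) =
        ({M (Sum.inl r) (Sum.inl s), M (Sum.inl s) (Sum.inl r)} : Multiset L)) ↔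
      (({M (Sum.inl u) p, M (Sum.inl v) p} : Multiset L) =
        ({M (Sum.inl r) q, M (Sum.inl s) q} : Multiset L))) ∧
     ((({M (Sum.inl u) p, M (Sum.inl v) p} : Multiset L) =
        ({M (Sum.inl r) q, M (Sum.inl s) q} : Multiset L)) ↔
      M p p = M q q)) :=
  ⟨pair_labels_eq_iff_binding_labels_eq hM huv hrs,
    diag_bindingVertex_eq_of_binding_labels_eq hM huv hrs,
    fun h => (pair_labels_eq_iff_binding_labels_eq hM huv hrs).mp
      (pair_labels_eq_of_diag_bindingVertex_eq hM huv hrs h)⟩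

/-- in a stable vertex-recognizing refinement of a binding graph
with more than 2 basic vertices, the labels on a pair of basic vertices, the
labels on the corresponding binding edges, and the label of the binding vertex
are mutually equivalent data. -/
theorem binding_labels_equivalent
    {V L : Type*} [Fintype V] [DecidableEq V] (G : SimpleGraph V)
    (hcard : 2 < Fintype.card V)
    (M : (V ⊕ Pairs V) → (V ⊕ Pairs V) → L)
    (hM : IsSVRRefinement (bindingGraph G) M)
    (u v r s : V) (huv : u ≠ v) (hrs : r ≠ s) :
    let p : V ⊕ Pairs V := Sum.inr ⟨{u, v}, Finset.card_pair huv⟩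
    let q : V ⊕ Pairs V := Sum.inr ⟨{r, s}, Finset.card_pair hrs⟩
    (((({M (Sum.inl u) (Sum.inl v), M (Sum.inl v) (Sum.inl u)} : Multiset L) =
        ({M (Sum.inl r) (Sum.inl s), M (Sum.inl s) (Sum.inl r)} : Multiset L)) ↔
      (({M (Sum.inl u) p, M (Sum.inl v) p} : Multiset L) =
        ({M (Sum.inl r) q, M (Sum.inl s) q} : Multiset L))) ∧
     ((({M (Sum.inl u) p, M (Sum.inl v) p} : Multiset L) =
        ({M (Sum.inl r) q, M (Sum.inl s) q} : Multiset L)) ↔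
      M p p = M q q)) :=
  binding_labels_equivalent_general G M hM u v r s huv hrs

end Binding
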